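/- As f → 0, the effective diffusion coefficient satisfies D(f) = (1/a₀)·(1 + f·(a₁/a₀ − 1/2)) + O(f²); that is, D(f) − 1/a₀ − (f/a₀)·(a₁/a₀ − 1/2) is O(f²) near f = 0. -/

import Mathlib

/-!
Since `exp (-f s) = 1 - f s + O(f²)` uniformly for `s ∈ [0, 1]`, and such uniform first-order
expansions survive products and integration over `[0, 1]`, one gets
`M₀(f) = a₀ - f a₁ + O(f²)` and `M₁(f) = a₀² - f (2 a₀ a₁ + a₀² / 2) + O(f²)`; dividing by `M₀³`,
which stays away from `0`, gives the expansion of `D`.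

The term `a₀² / 2` comes from `w₀(0, x) = e^{-φ x} ∫ e^φ`, which reduces the `s`-weighted part of
the first-order term of `M₁` to `∫∫ g x g (x + s) s` with `g = e^{-φ}`. Since
`A s = ∫ g x g (x + s) dx` satisfies `A (1 - s) = A s`, this is half of `∫ A = (∫ g)²`.
-/

open MeasureTheory intervalIntegral Asymptotics Filter

noncomputable def w0 (φ : ℝ → ℝ) (f x : ℝ) : ℝ :=
  ∫ s in (0:ℝ)..1, Real.exp (φ (x + s) - φ x - f * s)

noncomputable def M0 (φ : ℝ → ℝ) (f : ℝ) : ℝ := ∫ x in (0:ℝ)..1, w0 φ f x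

noncomputable def w1 (φ : ℝ → ℝ) (f x : ℝ) : ℝ :=
  ∫ s in (0:ℝ)..1, (w0 φ f (x + s)) ^ 2 * Real.exp (φ (x + s) - φ x - f * s)

noncomputable def M1 (φ : ℝ → ℝ) (f : ℝ) : ℝ := ∫ x in (0:ℝ)..1, w1 φ f x

open Set Topology

section UniformExpansion

variable {α : Type*} {S : Set α}

/-- `F f x = F₀ x + f * F₁ x + O(f²)` as `f → 0`, uniformly in `x ∈ S`, with coefficients
bounded on `S`. -/
structure HasUnifExpansion (S : Set α) (F : ℝ → α → ℝ) (F₀ F₁ : α → ℝ) : Prop where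
  isBigO_coeff₀ : (fun p : ℝ × α => F₀ p.2) =O[𝓝 0 ×ˢ 𝓟 S] fun _ => (1 : ℝ)
  isBigO_coeff₁ : (fun p : ℝ × α => F₁ p.2) =O[𝓝 0 ×ˢ 𝓟 S] fun _ => (1 : ℝ)
  isBigO_remainder :
    (fun p : ℝ × α => F p.1 p.2 - F₀ p.2 - p.1 * F₁ p.2) =O[𝓝 0 ×ˢ 𝓟 S] fun p => p.1 ^ 2

theorem isBigO_one_of_forall_abs_le {g : α → ℝ} (C : ℝ) (h : ∀ x ∈ S, |g x| ≤ C) :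
    (fun p : ℝ × α => g p.2) =O[𝓝 0 ×ˢ 𝓟 S] fun _ => (1 : ℝ) :=
  IsBigO.of_bound C <| eventually_prod_principal_iff.2 <| .of_forall fun _ x hx => by
    simpa using h x hx

theorem isBigO_fst_one : (fun p : ℝ × α => p.1) =O[𝓝 0 ×ˢ 𝓟 S] fun _ => (1 : ℝ) :=
  tendsto_fst.isBigO_one ℝ

namespace HasUnifExpansion

variable {F G : ℝ → α → ℝ} {F₀ F₁ G₀ G₁ : α → ℝ}

theorem isBigO_one (h : HasUnifExpansion S F F₀ F₁) :
    (fun p : ℝ × α => F p.1 p.2) =O[𝓝 0 ×ˢ 𝓟 S] fun _ => (1 : ℝ) := by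
  have hsq : (fun p : ℝ × α => p.1 ^ 2) =O[𝓝 0 ×ˢ 𝓟 S] fun _ => (1 : ℝ) := by
    simpa only [sq, mul_one] using isBigO_fst_one.mul (isBigO_fst_one (S := S))
  have hfF₁ := isBigO_fst_one.mul h.isBigO_coeff₁
  simp only [mul_one] at hfF₁
  exact ((h.isBigO_coeff₀.add hfF₁).add (h.isBigO_remainder.trans hsq)).congr_left
    fun p => by ring

theorem congr (h : HasUnifExpansion S F F₀ F₁)
    (hF : ∀ f, ∀ x ∈ S, F f x = G f x) (h₀ : ∀ x ∈ S, F₀ x = G₀ x) (h₁ : ∀ x ∈ S, F₁ x = G₁ x) :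
    HasUnifExpansion S G G₀ G₁ := by
  have hS : ∀ᶠ p : ℝ × α in 𝓝 0 ×ˢ 𝓟 S, p.2 ∈ S :=
    eventually_prod_principal_iff.2 (.of_forall fun _ _ hx => hx)
  refine ⟨h.1.congr' ?_ .rfl, h.2.congr' ?_ .rfl, h.3.congr' ?_ .rfl⟩ <;>
    filter_upwards [hS] with p hp
  · exact h₀ _ hp
  · exact h₁ _ hp
  · rw [hF _ _ hp, h₀ _ hp, h₁ _ hp]

theorem mul (hF : HasUnifExpansion S F F₀ F₁) (hG : HasUnifExpansion S G G₀ G₁) :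
    HasUnifExpansion S (fun f x => F f x * G f x) (fun x => F₀ x * G₀ x)
      (fun x => F₀ x * G₁ x + F₁ x * G₀ x) where
  isBigO_coeff₀ := by simpa using hF.isBigO_coeff₀.mul hG.isBigO_coeff₀
  isBigO_coeff₁ := by
    simpa using (hF.isBigO_coeff₀.mul hG.isBigO_coeff₁).add (hF.isBigO_coeff₁.mul hG.isBigO_coeff₀)
  isBigO_remainder := by
    have h₁ := hF.isBigO_remainder.mul hG.isBigO_one
    have h₂ := hF.isBigO_coeff₀.mul hG.isBigO_remainder
    have h₃ := (isBigO_refl (fun p : ℝ × α => p.1 ^ 2) _).mul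
      (hF.isBigO_coeff₁.mul hG.isBigO_coeff₁)
    have h₄ := (isBigO_fst_one.mul hF.isBigO_coeff₁).mul hG.isBigO_remainder
    simp only [mul_one, one_mul] at h₁ h₂ h₃ h₄
    exact (((h₁.add h₂).add h₃).add h₄).congr_left fun p => by ring

theorem pow (h : HasUnifExpansion S F F₀ F₁) (n : ℕ) :
    HasUnifExpansion S (fun f x => F f x ^ n) (fun x => F₀ x ^ n)
      (fun x => n * F₀ x ^ (n - 1) * F₁ x) := by
  induction n with
  | zero =>
    refine ⟨?_, ?_, ?_⟩ <;> simp only [pow_zero, Nat.cast_zero, zero_mul, mul_zero, sub_self]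
    · exact isBigO_refl _ _
    · exact isBigO_zero _ _
    · exact isBigO_zero _ _
  | succ n ih =>
    refine (ih.mul h).congr (fun _ _ _ => (pow_succ _ _).symm) (fun _ _ => (pow_succ _ _).symm)
      fun x _ => ?_
    rcases n with _ | n
    · simp
    · push_cast
      ring

theorem comp {β : Type*} {T : Set β} (h : HasUnifExpansion S F F₀ F₁) {g : β → α}
    (hg : MapsTo g T S) : HasUnifExpansion T (fun f y => F f (g y)) (F₀ ∘ g) (F₁ ∘ g) := by
  have hT : Tendsto (Prod.map id g) (𝓝 (0 : ℝ) ×ˢ 𝓟 T) (𝓝 0 ×ˢ 𝓟 S) :=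
    tendsto_id.prodMap (tendsto_principal_principal.2 hg)
  exact ⟨h.1.comp_tendsto hT, h.2.comp_tendsto hT, h.3.comp_tendsto hT⟩

theorem isBigO_apply (h : HasUnifExpansion S F F₀ F₁) {x : α} (hx : x ∈ S) :
    (fun f => F f x - F₀ x - f * F₁ x) =O[𝓝 0] fun f => f ^ 2 :=
  h.3.comp_tendsto (tendsto_id.prodMk (tendsto_principal.2 (.of_forall fun _ => hx)))

theorem tendsto_apply (h : HasUnifExpansion S F F₀ F₁) {x : α} (hx : x ∈ S) :
    Tendsto (fun f => F f x) (𝓝 0) (𝓝 (F₀ x)) := by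
  have hR := (h.isBigO_apply hx).trans_tendsto
    ((continuous_pow 2).tendsto' (0 : ℝ) 0 (by simp))
  have hL : Tendsto (fun f : ℝ => F₀ x + f * F₁ x) (𝓝 0) (𝓝 (F₀ x)) :=
    (continuous_const.add (continuous_id.mul continuous_const)).tendsto' _ _ (by simp)
  simpa using hL.add hR

end HasUnifExpansion

theorem hasUnifExpansion_add_mul {c₀ c₁ : α → ℝ}
    (h₀ : (fun p : ℝ × α => c₀ p.2) =O[𝓝 0 ×ˢ 𝓟 S] fun _ => (1 : ℝ))
    (h₁ : (fun p : ℝ × α => c₁ p.2) =O[𝓝 0 ×ˢ 𝓟 S] fun _ => (1 : ℝ)) :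
    HasUnifExpansion S (fun f x => c₀ x + f * c₁ x) c₀ c₁ :=
  ⟨h₀, h₁, (isBigO_zero _ _).congr_left fun _ => by ring⟩

theorem hasUnifExpansion_exp_mul {g : α → ℝ} {C : ℝ} (hg : ∀ x ∈ S, |g x| ≤ C) :
    HasUnifExpansion S (fun f x => Real.exp (f * g x)) 1 g := by
  refine ⟨isBigO_one_of_forall_abs_le 1 fun _ _ => by simp, isBigO_one_of_forall_abs_le C hg, ?_⟩
  have hsmall : ∀ᶠ f in 𝓝 (0 : ℝ), |f| * C ≤ 1 :=
    ((continuous_abs.mul continuous_const).tendsto' (0 : ℝ) 0 (by simp)).eventually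
      (Iic_mem_nhds one_pos)
  refine IsBigO.of_bound (C ^ 2) (eventually_prod_principal_iff.2 ?_)
  filter_upwards [hsmall] with f hf x hx
  have hfg : |f * g x| ≤ 1 := by
    rw [abs_mul]
    exact (mul_le_mul_of_nonneg_left (hg x hx) (abs_nonneg f)).trans hf
  have hg2 : g x ^ 2 ≤ C ^ 2 := sq_le_sq' (neg_le_of_abs_le (hg x hx)) (le_of_abs_le (hg x hx))
  calc ‖Real.exp (f * g x) - 1 - f * g x‖ ≤ (f * g x) ^ 2 := Real.abs_exp_sub_one_sub_id_le hfg
    _ = f ^ 2 * g x ^ 2 := by ring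
    _ ≤ f ^ 2 * C ^ 2 := by gcongr
    _ = C ^ 2 * ‖f ^ 2‖ := by rw [Real.norm_eq_abs, abs_of_nonneg (sq_nonneg f)]; ring

theorem isBigO_intervalIntegral {β : Type*} {l : Filter β} {R : β → α → ℝ → ℝ} {g : β → ℝ}
    {a b : ℝ}
    (h : (fun p : β × (α × ℝ) => R p.1 p.2.1 p.2.2) =O[l ×ˢ 𝓟 (S ×ˢ uIcc a b)] fun p => g p.1) :
    (fun p : β × α => ∫ s in a..b, R p.1 p.2 s) =O[l ×ˢ 𝓟 S] fun p => g p.1 := by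
  obtain ⟨C, hC⟩ := h.bound
  rw [eventually_prod_principal_iff] at hC
  refine IsBigO.of_bound (C * |b - a|) (eventually_prod_principal_iff.2 ?_)
  filter_upwards [hC] with y hy x hx
  calc ‖∫ s in a..b, R y x s‖ ≤ C * ‖g y‖ * |b - a| :=
        intervalIntegral.norm_integral_le_of_norm_le_const fun s hs =>
          hy (x, s) ⟨hx, uIoc_subset_uIcc hs⟩
    _ = C * |b - a| * ‖g y‖ := by ring

theorem HasUnifExpansion.intervalIntegral {F : ℝ → α → ℝ → ℝ} {F₀ F₁ : α → ℝ → ℝ} {a b : ℝ}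
    (h : HasUnifExpansion (S ×ˢ uIcc a b) (fun f p => F f p.1 p.2) (fun p => F₀ p.1 p.2)
      (fun p => F₁ p.1 p.2))
    (hF : ∀ f x, IntervalIntegrable (F f x) volume a b)
    (hF₀ : ∀ x, IntervalIntegrable (F₀ x) volume a b)
    (hF₁ : ∀ x, IntervalIntegrable (F₁ x) volume a b) :
    HasUnifExpansion S (fun f x => ∫ s in a..b, F f x s) (fun x => ∫ s in a..b, F₀ x s)
      (fun x => ∫ s in a..b, F₁ x s) := by
  refine ⟨isBigO_intervalIntegral (R := fun _ x s => F₀ x s) (g := fun _ => 1) h.1,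
    isBigO_intervalIntegral (R := fun _ x s => F₁ x s) (g := fun _ => 1) h.2,
    (isBigO_intervalIntegral (R := fun f x s => F f x s - F₀ x s - f * F₁ x s)
      (g := fun f => f ^ 2) h.3).congr_left
      fun p => ?_⟩
  rw [intervalIntegral.integral_sub ((hF _ _).sub (hF₀ _)) ((hF₁ _).const_mul _),
    intervalIntegral.integral_sub (hF _ _) (hF₀ _), intervalIntegral.integral_const_mul]


theorem HasUnifExpansion.isBigO_div_pow {m n : ℝ → ℝ} {a b c d : ℝ}
    (hm : HasUnifExpansion (univ : Set Unit) (fun f _ => m f) (fun _ => a) (fun _ => b))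
    (hn : HasUnifExpansion (univ : Set Unit) (fun f _ => n f) (fun _ => c) (fun _ => d))
    (ha : a ≠ 0) (k : ℕ) :
    (fun f => n f / m f ^ k - c / a ^ k - f * (d / a ^ k - k * c * b / a ^ (k + 1)))
      =O[𝓝 0] fun f => f ^ 2 := by
  have hT : HasUnifExpansion (univ : Set Unit)
      (fun f _ => (c / a ^ k + f * (d / a ^ k - k * c * b / a ^ (k + 1))) * m f ^ k)
      (fun _ => c) (fun _ => d) := by
    refine ((hasUnifExpansion_add_mul (isBigO_const_const _ one_ne_zero _)
      (isBigO_const_const _ one_ne_zero _)).mul (hm.pow k)).congr (fun _ _ _ => rfl)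
      (fun _ _ => by field_simp) fun _ _ => ?_
    rcases k with _ | k
    · simp
    · rw [Nat.add_sub_cancel]
      field_simp
      ring
  have hnum := ((hn.isBigO_apply (mem_univ ())).sub (hT.isBigO_apply (mem_univ ())))
  have hm_lim := hm.tendsto_apply (mem_univ ())
  have hinv : (fun f => (m f ^ k)⁻¹) =O[𝓝 0] fun _ => (1 : ℝ) :=
    ((hm_lim.pow k).inv₀ (pow_ne_zero k ha)).isBigO_one ℝ
  refine (hnum.mul hinv).congr' ?_ (.of_forall fun _ => mul_one _)
  filter_upwards [hm_lim.eventually_ne ha] with f hf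
  field_simp
  ring

end UniformExpansion

theorem Function.Periodic.intervalIntegral_comp_add_left {g : ℝ → ℝ} {T : ℝ}
    (hg : Function.Periodic g T) (c : ℝ) :
    ∫ s in (0 : ℝ)..T, g (c + s) = ∫ s in (0 : ℝ)..T, g s := by
  simpa using hg.intervalIntegral_add_eq c 0

theorem Function.Periodic.exists_abs_le {g : ℝ → ℝ} {T : ℝ} (hg : Function.Periodic g T)
    (hT : T ≠ 0) (hc : Continuous g) : ∃ K, ∀ x, |g x| ≤ K := by
  obtain ⟨K, hK⟩ := isBounded_iff_forall_norm_le.1 (hg.isBounded_of_continuous hT hc)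
  exact ⟨K, fun x => hK _ (mem_range_self x)⟩

theorem intervalIntegral_intervalIntegral_swap_of_continuous {F : ℝ → ℝ → ℝ} {a b c d : ℝ}
    (hF : Continuous fun p : ℝ × ℝ => F p.1 p.2) :
    ∫ x in a..b, ∫ y in c..d, F x y = ∫ y in c..d, ∫ x in a..b, F x y :=
  intervalIntegral_intervalIntegral_swap <| (hF.continuousOn.integrableOn_compact
    (isCompact_uIcc.prod isCompact_uIcc)).mono_set (prod_mono uIoc_subset_uIcc uIoc_subset_uIcc)

theorem integral_integral_mul_shift_mul {g : ℝ → ℝ} (hc : Continuous g)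
    (hg : Function.Periodic g 1) :
    ∫ x in (0 : ℝ)..1, ∫ s in (0 : ℝ)..1, g x * g (x + s) * s =
      (∫ x in (0 : ℝ)..1, g x) ^ 2 / 2 := by
  set A : ℝ → ℝ := fun s => ∫ x in (0 : ℝ)..1, g x * g (x + s)
  have hA : Continuous A := by fun_prop
  have hA_symm : ∀ s, A (1 - s) = A s := fun s => by
    have hper : Function.Periodic (fun x => g x * g (x - s)) 1 := fun x => by
      simp only [show x + 1 - s = x - s + 1 by ring, hg x, hg (x - s)]
    calc A (1 - s) = ∫ x in (0 : ℝ)..1, g x * g (x - s) := by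
          simp only [A, show ∀ x, x + (1 - s) = x - s + 1 from fun x => by ring, hg _]
      _ = ∫ x in (0 : ℝ)..1, g (s + x) * g (s + x - s) :=
          (hper.intervalIntegral_comp_add_left s).symm
      _ = A s := intervalIntegral.integral_congr fun x _ => by
          rw [add_comm s x, add_sub_cancel_right, mul_comm]
  have hswap : ∫ x in (0 : ℝ)..1, ∫ s in (0 : ℝ)..1, g x * g (x + s) * s =
      ∫ s in (0 : ℝ)..1, A s * s := by
    rw [intervalIntegral_intervalIntegral_swap_of_continuous (by fun_prop)]
    simp only [A, intervalIntegral.integral_mul_const]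
  have hreflect : ∫ s in (0 : ℝ)..1, A s * s = ∫ s in (0 : ℝ)..1, A s * (1 - s) := by
    simpa [hA_symm] using
      (intervalIntegral.integral_comp_sub_left (a := 0) (b := 1) (fun s => A s * s) 1).symm
  have htotal : ∫ s in (0 : ℝ)..1, A s = (∫ x in (0 : ℝ)..1, g x) ^ 2 := by
    rw [intervalIntegral_intervalIntegral_swap_of_continuous (by fun_prop)]
    simp only [intervalIntegral.integral_const_mul, hg.intervalIntegral_comp_add_left,
      intervalIntegral.integral_mul_const, sq]
  have hsum : (∫ s in (0 : ℝ)..1, A s * s) + ∫ s in (0 : ℝ)..1, A s * (1 - s) =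
      ∫ s in (0 : ℝ)..1, A s := by
    rw [← intervalIntegral.integral_add
      ((by fun_prop : Continuous fun s => A s * s).intervalIntegrable _ _)
      ((by fun_prop : Continuous fun s => A s * (1 - s)).intervalIntegrable _ _)]
    simp only [← mul_add, add_sub_cancel, mul_one]
  rw [hswap]
  linarith

noncomputable def w0Deriv (φ : ℝ → ℝ) (y : ℝ) : ℝ :=
  -∫ s in (0 : ℝ)..1, Real.exp (φ (y + s) - φ y) * s

section DiffusionCoefficient

variable {φ : ℝ → ℝ}

theorem continuous_w0 (hφ : Continuous φ) (f : ℝ) : Continuous (w0 φ f) := by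
  unfold w0; fun_prop

theorem continuous_w0Deriv (hφ : Continuous φ) : Continuous (w0Deriv φ) := by
  unfold w0Deriv; fun_prop

theorem w0Deriv_periodic (hper : Function.Periodic φ 1) : Function.Periodic (w0Deriv φ) 1 :=
  fun y => by simp only [w0Deriv, add_right_comm y 1, hper _]

theorem w0_zero (hper : Function.Periodic φ 1) (y : ℝ) :
    w0 φ 0 y = (∫ s in (0 : ℝ)..1, Real.exp (φ s)) * Real.exp (-φ y) := by
  have hexp : Function.Periodic (fun t => Real.exp (φ t)) 1 := fun t => by simp only [hper t]
  simp only [w0, zero_mul, sub_zero, Real.exp_sub, div_eq_mul_inv, ← Real.exp_neg,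
    intervalIntegral.integral_mul_const, hexp.intervalIntegral_comp_add_left]

theorem hasUnifExpansion_w0_integrand (hφ : Continuous φ) (hper : Function.Periodic φ 1) :
    HasUnifExpansion (univ ×ˢ uIcc 0 1) (fun f p => Real.exp (φ (p.1 + p.2) - φ p.1 - f * p.2))
      (fun p => Real.exp (φ (p.1 + p.2) - φ p.1))
      (fun p => -(Real.exp (φ (p.1 + p.2) - φ p.1) * p.2)) := by
  obtain ⟨K, hK⟩ := hper.exists_abs_le one_ne_zero hφ
  have hΔ : ∀ p ∈ (univ : Set ℝ) ×ˢ uIcc (0 : ℝ) 1,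
      |Real.exp (φ (p.1 + p.2) - φ p.1)| ≤ Real.exp (2 * K) := fun p _ => by
    rw [abs_of_pos (Real.exp_pos _), Real.exp_le_exp]
    linarith [abs_le.1 (hK (p.1 + p.2)), abs_le.1 (hK p.1)]
  have hs : ∀ p ∈ (univ : Set ℝ) ×ˢ uIcc (0 : ℝ) 1, |-p.2| ≤ 1 := fun p hp => by
    rw [uIcc_of_le zero_le_one] at hp
    rw [abs_neg, abs_of_nonneg hp.2.1]
    exact hp.2.2
  exact ((hasUnifExpansion_add_mul (c₁ := fun _ => 0)
    (isBigO_one_of_forall_abs_le _ hΔ) (isBigO_zero _ _)).mul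
    (hasUnifExpansion_exp_mul (g := fun p : ℝ × ℝ => -p.2) hs)).congr
    (fun f p _ => by rw [mul_zero, add_zero, ← Real.exp_add]; ring_nf)
    (fun p _ => by simp) (fun p _ => by simp)

theorem hasUnifExpansion_w0 (hφ : Continuous φ) (hper : Function.Periodic φ 1) :
    HasUnifExpansion univ (w0 φ) (w0 φ 0) (w0Deriv φ) :=
  ((hasUnifExpansion_w0_integrand hφ hper).intervalIntegral
    (F := fun f x s => Real.exp (φ (x + s) - φ x - f * s))
    (F₀ := fun x s => Real.exp (φ (x + s) - φ x))
    (F₁ := fun x s => -(Real.exp (φ (x + s) - φ x) * s))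
    (fun f x => Continuous.intervalIntegrable (by fun_prop) _ _)
    (fun x => Continuous.intervalIntegrable (by fun_prop) _ _)
    (fun x => Continuous.intervalIntegrable (by fun_prop) _ _)).congr
    (fun f x _ => rfl) (fun x _ => by simp [w0]) (fun x _ => by simp [w0Deriv])

theorem hasUnifExpansion_M0 (hφ : Continuous φ) (hper : Function.Periodic φ 1) :
    HasUnifExpansion (univ : Set Unit) (fun f _ => M0 φ f) (fun _ => M0 φ 0)
      (fun _ => ∫ x in (0 : ℝ)..1, w0Deriv φ x) :=
  ((hasUnifExpansion_w0 hφ hper).comp (g := Prod.snd) (mapsTo_univ _ _)).intervalIntegral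
    (F := fun f _ x => w0 φ f x) (F₀ := fun _ x => w0 φ 0 x) (F₁ := fun _ x => w0Deriv φ x)
    (fun f _ => (continuous_w0 hφ f).intervalIntegrable _ _)
    (fun _ => (continuous_w0 hφ 0).intervalIntegrable _ _)
    (fun _ => (continuous_w0Deriv hφ).intervalIntegrable _ _)

theorem M0_zero (hper : Function.Periodic φ 1) :
    M0 φ 0 = (∫ x in (0 : ℝ)..1, Real.exp (-φ x)) * ∫ s in (0 : ℝ)..1, Real.exp (φ s) := by
  rw [M0, intervalIntegral.integral_congr fun y _ => w0_zero hper y,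
    intervalIntegral.integral_const_mul, mul_comm]

theorem hasUnifExpansion_w1 (hφ : Continuous φ) (hper : Function.Periodic φ 1) :
    HasUnifExpansion univ (w1 φ) (w1 φ 0) fun x => ∫ s in (0 : ℝ)..1,
      (2 * w0 φ 0 (x + s) * w0Deriv φ (x + s) - w0 φ 0 (x + s) ^ 2 * s) *
        Real.exp (φ (x + s) - φ x) := by
  have hw0 := continuous_w0 hφ
  have hd := continuous_w0Deriv hφ
  have hintegrand := ((((hasUnifExpansion_w0 hφ hper).comp (g := fun p : ℝ × ℝ => p.1 + p.2)
    (mapsTo_univ _ (univ ×ˢ uIcc 0 1))).pow 2).mul (hasUnifExpansion_w0_integrand hφ hper)).congr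
    (G₁ := fun p => (2 * w0 φ 0 (p.1 + p.2) * w0Deriv φ (p.1 + p.2) -
        w0 φ 0 (p.1 + p.2) ^ 2 * p.2) * Real.exp (φ (p.1 + p.2) - φ p.1))
    (fun _ _ _ => rfl) (fun _ _ => rfl) (fun p _ => by simp only [Function.comp_apply]; ring)
  exact (hintegrand.intervalIntegral
    (F := fun f x s => w0 φ f (x + s) ^ 2 * Real.exp (φ (x + s) - φ x - f * s))
    (F₀ := fun x s => w0 φ 0 (x + s) ^ 2 * Real.exp (φ (x + s) - φ x))
    (F₁ := fun x s => (2 * w0 φ 0 (x + s) * w0Deriv φ (x + s) - w0 φ 0 (x + s) ^ 2 * s) *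
        Real.exp (φ (x + s) - φ x))
    (fun f x => Continuous.intervalIntegrable (by fun_prop) _ _)
    (fun x => Continuous.intervalIntegrable (by fun_prop) _ _)
    (fun x => Continuous.intervalIntegrable (by fun_prop) _ _)
    ).congr (fun _ _ _ => rfl) (fun x _ => by simp [w1]) (fun _ _ => rfl)

theorem w0_zero_mul_exp (hper : Function.Periodic φ 1) (x s : ℝ) :
    w0 φ 0 (x + s) * Real.exp (φ (x + s) - φ x) =
      (∫ t in (0 : ℝ)..1, Real.exp (φ t)) * Real.exp (-φ x) := by
  rw [w0_zero hper, mul_assoc, ← Real.exp_add]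
  ring_nf

theorem M1_zero (hper : Function.Periodic φ 1) : M1 φ 0 = M0 φ 0 ^ 2 := by
  set Ip := ∫ t in (0 : ℝ)..1, Real.exp (φ t)
  have hexp : Function.Periodic (fun t => Real.exp (-φ t)) 1 := fun t => by simp only [hper t]
  have hw1 : ∀ x, w1 φ 0 x = Ip ^ 2 * (∫ t in (0 : ℝ)..1, Real.exp (-φ t)) * Real.exp (-φ x) :=
    fun x => by
      calc w1 φ 0 x = ∫ s in (0 : ℝ)..1, Ip ^ 2 * Real.exp (-φ x) * Real.exp (-φ (x + s)) := by
            refine intervalIntegral.integral_congr fun s _ => ?_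
            simp only [zero_mul, sub_zero]
            rw [sq, mul_assoc, w0_zero_mul_exp hper, w0_zero hper]
            ring
        _ = _ := by
            rw [intervalIntegral.integral_const_mul, hexp.intervalIntegral_comp_add_left]
            ring
  rw [M1, intervalIntegral.integral_congr fun x _ => hw1 x, intervalIntegral.integral_const_mul,
    M0_zero hper]
  ring

theorem integral_integral_w1_coeff (hφ : Continuous φ) (hper : Function.Periodic φ 1) :
    ∫ x in (0 : ℝ)..1, ∫ s in (0 : ℝ)..1,
        (2 * w0 φ 0 (x + s) * w0Deriv φ (x + s) - w0 φ 0 (x + s) ^ 2 * s) *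
          Real.exp (φ (x + s) - φ x) =
      2 * M0 φ 0 * (∫ x in (0 : ℝ)..1, w0Deriv φ x) - M0 φ 0 ^ 2 / 2 := by
  set Ip := ∫ t in (0 : ℝ)..1, Real.exp (φ t)
  have hd := continuous_w0Deriv hφ
  have hexp : Function.Periodic (fun t => Real.exp (-φ t)) 1 := fun t => by simp only [hper t]
  have hinner : ∀ x, ∫ s in (0 : ℝ)..1,
      (2 * w0 φ 0 (x + s) * w0Deriv φ (x + s) - w0 φ 0 (x + s) ^ 2 * s) *
        Real.exp (φ (x + s) - φ x) =
      2 * Ip * (∫ t in (0 : ℝ)..1, w0Deriv φ t) * Real.exp (-φ x) -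
        Ip ^ 2 * ∫ s in (0 : ℝ)..1, Real.exp (-φ x) * Real.exp (-φ (x + s)) * s := fun x => by
    calc _ = ∫ s in (0 : ℝ)..1, (2 * Ip * Real.exp (-φ x) * w0Deriv φ (x + s) -
          Ip ^ 2 * (Real.exp (-φ x) * Real.exp (-φ (x + s)) * s)) := by
          refine intervalIntegral.integral_congr fun s _ => ?_
          have h := w0_zero_mul_exp hper x s
          rw [w0_zero hper] at h ⊢
          linear_combination (2 * w0Deriv φ (x + s) - Ip * Real.exp (-φ (x + s)) * s) * h
      _ = _ := by
          rw [intervalIntegral.integral_sub (Continuous.intervalIntegrable (by fun_prop) _ _)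
            (Continuous.intervalIntegrable (by fun_prop) _ _), intervalIntegral.integral_const_mul,
            intervalIntegral.integral_const_mul,
            (w0Deriv_periodic hper).intervalIntegral_comp_add_left]
          ring
  rw [intervalIntegral.integral_congr fun x _ => hinner x,
    intervalIntegral.integral_sub (Continuous.intervalIntegrable (by fun_prop) _ _)
      (Continuous.intervalIntegrable (by fun_prop) _ _),
    intervalIntegral.integral_const_mul, intervalIntegral.integral_const_mul,
    integral_integral_mul_shift_mul (by fun_prop) hexp, M0_zero hper]
  ring

theorem M0_zero_pos (hφ : Continuous φ) (hper : Function.Periodic φ 1) : 0 < M0 φ 0 := by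
  rw [M0_zero hper]
  exact mul_pos
    (intervalIntegral.intervalIntegral_pos_of_pos (Continuous.intervalIntegrable (by fun_prop) _ _)
      (fun _ => Real.exp_pos _) one_pos)
    (intervalIntegral.intervalIntegral_pos_of_pos (Continuous.intervalIntegrable (by fun_prop) _ _)
      (fun _ => Real.exp_pos _) one_pos)

theorem hasUnifExpansion_M1 (hφ : Continuous φ) (hper : Function.Periodic φ 1) :
    HasUnifExpansion (univ : Set Unit) (fun f _ => M1 φ f) (fun _ => M0 φ 0 ^ 2)
      fun _ => 2 * M0 φ 0 * (∫ x in (0 : ℝ)..1, w0Deriv φ x) - M0 φ 0 ^ 2 / 2 := by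
  have hw0 := continuous_w0 hφ
  have hd := continuous_w0Deriv hφ
  refine (((hasUnifExpansion_w1 hφ hper).comp (g := Prod.snd) (mapsTo_univ _ _)).intervalIntegral
    (F := fun f _ x => w1 φ f x) (F₀ := fun _ x => w1 φ 0 x)
    (F₁ := fun _ x => ∫ s in (0 : ℝ)..1,
      (2 * w0 φ 0 (x + s) * w0Deriv φ (x + s) - w0 φ 0 (x + s) ^ 2 * s) *
        Real.exp (φ (x + s) - φ x))
    (fun f _ => Continuous.intervalIntegrable (by unfold w1; fun_prop) _ _)
    (fun _ => Continuous.intervalIntegrable (by unfold w1; fun_prop) _ _)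
    (fun _ => Continuous.intervalIntegrable (by fun_prop) _ _)).congr
    (fun _ _ _ => rfl) (fun _ _ => M1_zero hper) (fun _ _ => integral_integral_w1_coeff hφ hper)

end DiffusionCoefficient

/-- As `f → 0`, the effective diffusion coefficient
`D(f) = M₁(f)/M₀(f)³` satisfies `D(f) = (1/a₀)·(1 + f·(a₁/a₀ − 1/2)) + O(f²)`. -/
theorem stmt_10 (φ : ℝ → ℝ) (hφc : Continuous φ) (hφper : ∀ x, φ (x + 1) = φ x)
    (a0 a1 : ℝ)
    (ha0 : a0 = (∫ x in (0:ℝ)..1, Real.exp (-φ x)) * ∫ s in (0:ℝ)..1, Real.exp (φ s))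
    (ha1 : a1 = ∫ x in (0:ℝ)..1, ∫ s in (0:ℝ)..1, Real.exp (φ (x + s) - φ x) * s)
    (D : ℝ → ℝ) (hD : ∀ f, D f = M1 φ f / (M0 φ f) ^ 3) :
    (fun f => D f - 1 / a0 - f / a0 * (a1 / a0 - 1 / 2)) =O[nhds 0]
      (fun f => f ^ 2) := by
  have hM0₀ : M0 φ 0 = a0 := by rw [M0_zero hφper, ha0]
  have hM0₁ : ∫ x in (0 : ℝ)..1, w0Deriv φ x = -a1 := by
    rw [ha1, ← intervalIntegral.integral_neg]; rfl
  have ha0_ne : a0 ≠ 0 := hM0₀ ▸ (M0_zero_pos hφc hφper).ne'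
  have h := (hasUnifExpansion_M0 hφc hφper).isBigO_div_pow (hasUnifExpansion_M1 hφc hφper)
    (M0_zero_pos hφc hφper).ne' 3
  rw [hM0₀, hM0₁] at h
  refine h.congr_left fun f => ?_
  rw [hD]
  field_simp
  ring
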